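/- Let G be a finite undirected simple graph, H a digraph, σ a linear order on V(G), and let D' be a σ-lexicographic-product instance of (G, H) that is η-good for (G, H). Then α⃗(D') ≤ α(G) · α⃗(H) + |V(G)| · |V(H)|^η. -/

import Mathlib

/-- A set `S` of vertices of the digraph with arc relation `A` is acyclic. -/
def AcyclicSet {V : Type*} (A : V → V → Prop) (S : Set V) : Prop :=
  ∀ x, ¬ Relation.TransGen (fun a b => a ∈ S ∧ b ∈ S ∧ A a b) x x

/-- The acyclic number `α⃗(D)`: the maximum size of an acyclic set of vertices. -/
noncomputable def acyclicNum {V : Type*} [Fintype V] (A : V → V → Prop) : ℕ :=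
  sSup {n | ∃ S : Finset V, AcyclicSet A ↑S ∧ S.card = n}

/-- The independence number of an undirected simple graph. -/
noncomputable def graphIndepNum {α : Type*} [Fintype α] (G : SimpleGraph α) : ℕ :=
  sSup {n | ∃ S : Finset α, (∀ u ∈ S, ∀ v ∈ S, ¬ G.Adj u v) ∧ S.card = n}

/-- `D` is a `σ`-lexicographic-product instance of `(G, H)`. -/
def IsLexInstance {α β : Type*} [LinearOrder α] (G : SimpleGraph α) (HA : β → β → Prop)
    (D : α × β → α × β → Prop) : Prop :=
  (∀ u : α, ∀ a b : β, (D (u, a) (u, b) ↔ HA a b)) ∧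
  (∀ u v : α, G.Adj u v → ∀ a b : β, (D (u, a) (v, b) ↔ ¬ D (v, b) (u, a))) ∧
  (∀ u v : α, u ≠ v → ¬ G.Adj u v → u < v →
    ∀ a b : β, D (u, a) (v, b) ∧ ¬ D (v, b) (u, a))

/-- `D` is `η`-good for `(G, H)`: for every edge `{u,v}` of `G` and all subsets `A_u`
of the cloud of `u` and `A_v` of the cloud of `v` with `|A_u|, |A_v| ≥ |V(H)|^η`, the
induced subdigraph `D[A_u ∪ A_v]` contains a directed cycle. -/
def EtaGood {α β : Type*} [Fintype β] (G : SimpleGraph α)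
    (D : α × β → α × β → Prop) (η : ℝ) : Prop :=
  ∀ u v : α, G.Adj u v → ∀ Au Av : Finset (α × β),
    (∀ p ∈ Au, p.1 = u) → (∀ p ∈ Av, p.1 = v) →
    (Fintype.card β : ℝ) ^ η ≤ (Au.card : ℝ) →
    (Fintype.card β : ℝ) ^ η ≤ (Av.card : ℝ) →
    ¬ AcyclicSet D (↑Au ∪ ↑Av)

/-!
Take a maximum acyclic set `S` of `D'` and split it into its traces on the clouds. Since
`D'` restricted to a cloud is a copy of `H`, every trace has at most `α⃗(H)` vertices. Call a
cloud heavy if its trace has at least `|V(H)|^η` vertices: by `η`-goodness, the traces on two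
adjacent clouds cannot both be that large inside the acyclic set `S`, so the heavy clouds form
an independent set of `G`. The heavy clouds contribute at most `α(G) · α⃗(H)`, the light ones at
most `|V(G)| · |V(H)|^η`.
-/

open Finset

theorem AcyclicSet.mono {V : Type*} {A : V → V → Prop} {S T : Set V} (h : S ⊆ T)
    (hT : AcyclicSet A T) : AcyclicSet A S := fun x hx =>
  hT x (Relation.TransGen.mono (fun _ _ hab => ⟨h hab.1, h hab.2.1, hab.2.2⟩) _ _ hx)

theorem acyclicSet_empty {V : Type*} (A : V → V → Prop) : AcyclicSet A ∅ := by
  intro x hx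
  cases hx <;> simp_all

section Finite

variable {V : Type*} [Fintype V]

theorem bddAbove_setOf_card {P : Finset V → Prop} :
    BddAbove {n | ∃ S : Finset V, P S ∧ S.card = n} := by
  refine ⟨Fintype.card V, ?_⟩
  rintro _ ⟨S, -, rfl⟩
  exact S.card_le_univ

theorem card_le_acyclicNum (A : V → V → Prop) {S : Finset V} (hS : AcyclicSet A S) :
    S.card ≤ acyclicNum A :=
  le_csSup bddAbove_setOf_card ⟨S, hS, rfl⟩

theorem exists_acyclicSet_card_eq_acyclicNum (A : V → V → Prop) :
    ∃ S : Finset V, AcyclicSet A S ∧ S.card = acyclicNum A :=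
  Nat.sSup_mem (s := {n | ∃ S : Finset V, AcyclicSet A S ∧ S.card = n})
    ⟨0, ∅, by simpa using acyclicSet_empty A, rfl⟩ bddAbove_setOf_card

theorem card_le_graphIndepNum (G : SimpleGraph V) {S : Finset V}
    (hS : ∀ u ∈ S, ∀ v ∈ S, ¬ G.Adj u v) : S.card ≤ graphIndepNum G :=
  le_csSup bddAbove_setOf_card ⟨S, hS, rfl⟩

end Finite

section Clouds

variable {α β : Type*} [DecidableEq α] {D : α × β → α × β → Prop} {S : Finset (α × β)}

theorem card_filter_fst_eq_le_acyclicNum [Fintype β] {HA : β → β → Prop} {u : α}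
    (hcloud : ∀ a b, HA a b → D (u, a) (u, b)) (hS : AcyclicSet D S) :
    (S.filter (·.1 = u)).card ≤ acyclicNum HA := by
  classical
  let T : Finset β := univ.filter fun b => (u, b) ∈ S
  have hT : AcyclicSet HA T := fun b hb =>
    hS (u, b) <| Relation.TransGen.lift (fun c => (u, c))
      (fun c d ⟨hc, hd, hcd⟩ => ⟨by simpa [T] using hc, by simpa [T] using hd, hcloud c d hcd⟩)
      _ _ hb
  calc (S.filter (·.1 = u)).card ≤ T.card := by
        refine card_le_card_of_injOn Prod.snd ?_ ?_
        · rintro ⟨w, b⟩ hp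
          rw [mem_coe, mem_filter] at hp
          obtain ⟨hp, rfl⟩ := hp
          simpa [T] using hp
        · rintro p hp q hq hpq
          rw [mem_coe, mem_filter] at hp hq
          exact Prod.ext (hp.2.trans hq.2.symm) hpq
    _ ≤ acyclicNum HA := card_le_acyclicNum HA hT

theorem EtaGood.not_adj_of_le_card_filter_fst_eq [Fintype β] {G : SimpleGraph α} {η : ℝ}
    (hgood : EtaGood G D η) (hS : AcyclicSet D S) {u v : α}
    (hu : (Fintype.card β : ℝ) ^ η ≤ (S.filter (·.1 = u)).card)
    (hv : (Fintype.card β : ℝ) ^ η ≤ (S.filter (·.1 = v)).card) : ¬ G.Adj u v := fun hadj =>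
  hgood u v hadj _ _ (fun _ hp => (mem_filter.mp hp).2) (fun _ hp => (mem_filter.mp hp).2) hu hv
    (hS.mono (Set.union_subset (coe_subset.mpr (filter_subset _ _))
      (coe_subset.mpr (filter_subset _ _))))

end Clouds

theorem sum_le_mul_add_card_mul_of_card_large_le {ι : Type*} [Fintype ι] (f : ι → ℕ)
    {M k : ℕ} {t : ℝ} (ht : 0 ≤ t) (hf : ∀ i, f i ≤ M)
    (hk : (univ.filter fun i => t ≤ f i).card ≤ k) :
    ∑ i, (f i : ℝ) ≤ k * M + Fintype.card ι * t := by
  rw [← sum_filter_add_sum_filter_not univ (fun i => t ≤ f i)]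
  gcongr
  · calc ∑ i ∈ univ with t ≤ f i, (f i : ℝ)
        ≤ (univ.filter fun i => t ≤ f i).card • (M : ℝ) :=
          sum_le_card_nsmul _ _ _ fun i _ => by exact_mod_cast hf i
      _ ≤ k * M := by rw [nsmul_eq_mul]; gcongr
  · calc ∑ i ∈ univ with ¬ t ≤ f i, (f i : ℝ)
        ≤ (univ.filter fun i => ¬ t ≤ f i).card • t :=
          sum_le_card_nsmul _ _ _ fun i hi => (not_le.mp (mem_filter.mp hi).2).le
      _ ≤ Fintype.card ι * t := by
          rw [nsmul_eq_mul]; gcongr; exact_mod_cast card_le_univ _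

theorem stmt5_general {α β : Type*} [Fintype α] [Fintype β] [LinearOrder α]
    (G : SimpleGraph α) (HA : β → β → Prop)
    (D : α × β → α × β → Prop) (hD : IsLexInstance G HA D)
    (η : ℝ) (hgood : EtaGood G D η) :
    (acyclicNum D : ℝ) ≤ (graphIndepNum G : ℝ) * (acyclicNum HA : ℝ)
      + (Fintype.card α : ℝ) * (Fintype.card β : ℝ) ^ η := by
  obtain ⟨S, hS, hcard⟩ := exists_acyclicSet_card_eq_acyclicNum D
  have hsplit : S.card = ∑ u, (S.filter (·.1 = u)).card :=
    card_eq_sum_card_fiberwise fun p _ => mem_coe.mpr (mem_univ p.1)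
  rw [← hcard, hsplit, Nat.cast_sum]
  refine sum_le_mul_add_card_mul_of_card_large_le _ (by positivity)
    (fun u => card_filter_fst_eq_le_acyclicNum (fun a b => (hD.1 u a b).2) hS)
    (card_le_graphIndepNum G fun u hu v hv => ?_)
  exact hgood.not_adj_of_le_card_filter_fst_eq hS (mem_filter.mp hu).2 (mem_filter.mp hv).2

/-- If `D'` is a `σ`-lexicographic-product instance of `(G, H)` which is `η`-good for
`(G, H)`, then `α⃗(D') ≤ α(G)·α⃗(H) + |V(G)|·|V(H)|^η`. -/
theorem stmt5 {α β : Type*} [Fintype α] [Fintype β] [LinearOrder α]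
    (G : SimpleGraph α) (HA : β → β → Prop) (hH : ∀ b, ¬ HA b b)
    (D : α × β → α × β → Prop) (hD : IsLexInstance G HA D)
    (η : ℝ) (hgood : EtaGood G D η) :
    (acyclicNum D : ℝ) ≤ (graphIndepNum G : ℝ) * (acyclicNum HA : ℝ)
      + (Fintype.card α : ℝ) * (Fintype.card β : ℝ) ^ η :=
  stmt5_general G HA D hD η hgood
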